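/- Let Ω be an eventually outward finitely branched tree quiver. There is no infinite sequence α_1, α_2, … of connected full subquivers of Ω such that each α_{n+1} is a nontrivial reduction or enhancement of α_n. -/

import Mathlib

attribute [local instance] Classical.propDecidable

/-- A quiver in the sense of the paper: a set of vertices, a set of arrows,
and source and target functions. -/
structure Qvr where
  V : Type
  A : Type
  s : A → V
  t : A → V

namespace Qvr

variable (Ω : Qvr)

/-- The underlying (simple) graph of a quiver: `i` and `j` are adjacent iff they are joined
by some arrow. -/
def graph : SimpleGraph Ω.V where
  Adj i j := i ≠ j ∧ ∃ a, (Ω.s a = i ∧ Ω.t a = j) ∨ (Ω.s a = j ∧ Ω.t a = i)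
  symm := by
    constructor
    rintro i j ⟨h1, a, h2⟩
    exact ⟨h1.symm, a, h2.symm⟩
  loopless := by
    constructor
    rintro i ⟨h1, -⟩
    exact h1 rfl

/-- The quiver "has an underlying graph": no arrow is a loop, and each pair of vertices is
joined by at most one arrow. -/
def Simple : Prop :=
  (∀ a, Ω.s a ≠ Ω.t a) ∧
    ∀ a b, ({Ω.s a, Ω.t a} : Set Ω.V) = {Ω.s b, Ω.t b} → a = b

/-- A vertex `i` is *behind* the arrow `e` if it lies in the connected component of `s e`
after the (edge of the) arrow `e` is removed from the underlying graph. -/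
def Behind (e : Ω.A) (i : Ω.V) : Prop :=
  ((Ω.graph.deleteEdges {s(Ω.s e, Ω.t e)}).Reachable (Ω.s e) i)

/-- A vertex `i` is *in front of* the arrow `e` if it lies in the connected component of
`t e` after the (edge of the) arrow `e` is removed from the underlying graph. -/
def InFront (e : Ω.A) (i : Ω.V) : Prop :=
  ((Ω.graph.deleteEdges {s(Ω.s e, Ω.t e)}).Reachable (Ω.t e) i)

/-- The arrow `f` is behind the arrow `e` (both of its endpoints are). -/
def ABehind (f e : Ω.A) : Prop := Ω.Behind e (Ω.s f) ∧ Ω.Behind e (Ω.t f)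

/-- The arrow `e` is in front of the arrow `f` (both of its endpoints are). -/
def AInFront (e f : Ω.A) : Prop := Ω.InFront f (Ω.s e) ∧ Ω.InFront f (Ω.t e)

/-- The strict relation `≺` on arrows: `f ≺ e` iff `f` is behind `e` and `e` is in front
of `f`. -/
def Prec (f e : Ω.A) : Prop := Ω.ABehind f e ∧ Ω.AInFront e f

/-- A (finite or one-sided infinite) journey in `Ω`: a walk together with a starting vertex.
It visits the vertices `vtx 0, vtx 1, …, vtx len` (all `n : ℕ` when `len = ⊤`), crossing
for each `n < len` the arrow `arr n`, which joins `vtx n` and `vtx (n+1)` in some direction.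
(The values of `vtx` and `arr` beyond `len` are irrelevant.) -/
structure Journey (Ω : Qvr) where
  len : ℕ∞
  vtx : ℕ → Ω.V
  arr : ℕ → Ω.A
  compat : ∀ n : ℕ, (n : ℕ∞) < len →
    (Ω.s (arr n) = vtx n ∧ Ω.t (arr n) = vtx (n + 1)) ∨
      (Ω.s (arr n) = vtx (n + 1) ∧ Ω.t (arr n) = vtx n)

/-- A journey is injective if it visits no vertex twice. -/
def Journey.Inj {Ω : Qvr} (w : Journey Ω) : Prop :=
  ∀ m n : ℕ, (m : ℕ∞) ≤ w.len → (n : ℕ∞) ≤ w.len → w.vtx m = w.vtx n → m = n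

/-- The `n`-th arrow of the journey `w` is oriented inconsistently (crossed from target to
source). -/
def Journey.Inconsistent {Ω : Qvr} (w : Journey Ω) (n : ℕ) : Prop :=
  Ω.s (w.arr n) = w.vtx (n + 1) ∧ Ω.t (w.arr n) = w.vtx n

/-- `Ω` is eventually outward if every injective journey contains at most finitely many
arrows oriented inconsistently. -/
def EventuallyOutward : Prop :=
  ∀ w : Journey Ω, w.Inj → {n : ℕ | (n : ℕ∞) < w.len ∧ w.Inconsistent n}.Finite

/-- `Ω` is finitely branched if it is the union of finitely many injective walks
(equivalently, journeys). -/
def FinitelyBranched : Prop :=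
  ∃ (k : ℕ) (J : Fin k → Journey Ω), (∀ m, (J m).Inj) ∧
    (∀ i : Ω.V, ∃ (m : Fin k) (n : ℕ), (n : ℕ∞) ≤ (J m).len ∧ (J m).vtx n = i) ∧
    (∀ a : Ω.A, ∃ (m : Fin k) (n : ℕ), (n : ℕ∞) < (J m).len ∧ (J m).arr n = a)

end Qvr

namespace Qvr

variable (Ω : Qvr)

/-- `S` is the vertex set of a connected (full) subquiver: any two of its vertices are
joined by a walk inside `S`. -/
def ConnSub (S : Set Ω.V) : Prop :=
  ∀ (i : Ω.V) (hi : i ∈ S) (j : Ω.V) (hj : j ∈ S),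
    (Ω.graph.induce S).Reachable ⟨i, hi⟩ ⟨j, hj⟩

/-- The arrow `e` points towards the (full) subquiver with vertex set `S`:
all of `S` lies in front of `e`. -/
def PointsToward (e : Ω.A) (S : Set Ω.V) : Prop := ∀ i ∈ S, Ω.InFront e i

/-- `β` is a *reduction* of `α`: there is an arrow `e` contained in `α` such that `β` is the
portion of `α` behind `e`. -/
def Reduction (α β : Set Ω.V) : Prop :=
  ∃ e : Ω.A, Ω.s e ∈ α ∧ Ω.t e ∈ α ∧ β = {i ∈ α | Ω.Behind e i}

/-- `β` is an *enhancement* of `α`: there is an arrow `e` contained in `β` such that `α` is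
the portion of `β` in front of `e`. -/
def Enhancement (α β : Set Ω.V) : Prop :=
  ∃ e : Ω.A, Ω.s e ∈ β ∧ Ω.t e ∈ β ∧ α = {i ∈ β | Ω.InFront e i}

/-- A single move: `β` is obtained from `α` by a reduction or an enhancement. -/
def Move (α β : Set Ω.V) : Prop := Ω.Reduction α β ∨ Ω.Enhancement α β

/-- The set `𝒞` of connected full subquivers of `Ω` (recorded by their vertex sets). -/
def CC (Ω : Qvr) := {S : Set Ω.V // Ω.ConnSub S}

/-- The strict order on `𝒞`: `α > β` iff `β` is obtained from `α` by a finite nonempty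
sequence of reductions and enhancements. -/
def GtC : Ω.CC → Ω.CC → Prop :=
  Relation.TransGen fun x y : Ω.CC => Ω.Move x.1 y.1

end Qvr


/-! ### Auxiliary development for Statement 3 -/

section Stmt3Aux

open SimpleGraph Relation

namespace Qvr

variable {Ω : Qvr}

/-- The underlying graph with the edge of the arrow `e` deleted. -/
abbrev dg (Ω : Qvr) (e : Ω.A) : SimpleGraph Ω.V :=
  Ω.graph.deleteEdges {s(Ω.s e, Ω.t e)}

lemma behind_refl (e : Ω.A) : Ω.Behind e (Ω.s e) := Reachable.refl _

lemma inFront_refl (e : Ω.A) : Ω.InFront e (Ω.t e) := Reachable.refl _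

lemma adj_arrow (hS : Ω.Simple) (e : Ω.A) : Ω.graph.Adj (Ω.s e) (Ω.t e) :=
  ⟨hS.1 e, e, Or.inl ⟨rfl, rfl⟩⟩

lemma arrow_eq_of_sym2 (hS : Ω.Simple) {f e : Ω.A}
    (h : s(Ω.s f, Ω.t f) = s(Ω.s e, Ω.t e)) : f = e := by
  apply hS.2
  rcases Sym2.eq_iff.mp h with ⟨h1, h2⟩ | ⟨h1, h2⟩
  · rw [h1, h2]
  · rw [h1, h2]; exact Set.pair_comm _ _


lemma no_desc_of_wf {A : Type*} {r : A → A → Prop} (h : WellFounded r) (f : ℕ → A)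
    (hf : ∀ n, r (f (n + 1)) (f n)) : False := by
  have key : ∀ a, ∀ n, f n = a → False := fun a => by
    induction a using WellFounded.induction h with
    | _ a ih =>
      intro n hn
      exact ih (f (n + 1)) (hn ▸ hf n) (n + 1) rfl
  exact key (f 0) 0 rfl

lemma wf_of_no_desc {A : Type*} {r : A → A → Prop}
    (h : ∀ f : ℕ → A, ¬∀ n, r (f (n + 1)) (f n)) : WellFounded r := by
  by_contra hwf
  obtain ⟨a, ha⟩ : ∃ a, ¬Acc r a := by
    by_contra h'
    push_neg at h'
    exact hwf ⟨h'⟩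
  choose nxt hnacc hrel using
    fun x : {a : A // ¬Acc r a} => exists_not_acc_lt_of_not_acc x.2
  set F : ℕ → {a : A // ¬Acc r a} :=
    fun n => Nat.rec ⟨a, ha⟩ (fun _ p => ⟨nxt p, hnacc p⟩) n with hF
  exact h (fun n => (F n).1) (fun n => hrel (F n))

lemma not_behind_inFront (hS : Ω.Simple) (hT : Ω.graph.IsTree) (e : Ω.A) (v : Ω.V) :
    ¬(Ω.Behind e v ∧ Ω.InFront e v) := by
  rintro ⟨hb, hf⟩
  have hbr := (SimpleGraph.isAcyclic_iff_forall_adj_isBridge.mp hT.2) (adj_arrow hS e)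
  exact hbr (hb.trans hf.symm)

/-- Walking from a vertex satisfying `P` to one not satisfying it, one crosses
an edge from `P` to `¬ P`. -/
lemma walk_cross {V : Type} {G : SimpleGraph V} (P : V → Prop) :
    ∀ {a b : V} (w : G.Walk a b), P a → ¬P b →
      ∃ x y, G.Adj x y ∧ G.Reachable a x ∧ P x ∧ ¬P y ∧ s(x, y) ∈ w.edges := by
  intro a b w
  induction w with
  | nil => exact fun ha hb => absurd ha hb
  | @cons u c d h p ih =>
    intro ha hb
    by_cases hc : P c
    · obtain ⟨x, y, hxy, hax, hPx, hPy, hmem⟩ := ih hc hb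
      exact ⟨x, y, hxy, h.reachable.trans hax, hPx, hPy, by simp [hmem]⟩
    · exact ⟨u, c, h, Reachable.refl u, ha, hc, by simp⟩

lemma cover_walk (e : Ω.A) :
    ∀ {a b : Ω.V}, Ω.graph.Walk a b →
      (Ω.Behind e a ∨ Ω.InFront e a) → (Ω.Behind e b ∨ Ω.InFront e b) := by
  intro a b w
  induction w with
  | nil => exact id
  | @cons u c d h p ih =>
    intro ha
    apply ih
    by_cases hc : s(u, c) = s(Ω.s e, Ω.t e)
    · rcases Sym2.eq_iff.mp hc with ⟨-, rfl⟩ | ⟨-, rfl⟩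
      · exact Or.inr (inFront_refl e)
      · exact Or.inl (behind_refl e)
    · have hadj : (dg Ω e).Adj u c := SimpleGraph.deleteEdges_adj.mpr ⟨h, by simpa using hc⟩
      rcases ha with hb' | hf'
      · exact Or.inl (hb'.trans hadj.reachable)
      · exact Or.inr (hf'.trans hadj.reachable)

lemma behind_or_inFront (hT : Ω.graph.IsTree) (e : Ω.A) (v : Ω.V) :
    Ω.Behind e v ∨ Ω.InFront e v := by
  obtain ⟨w⟩ := hT.1.preconnected (Ω.s e) v
  exact cover_walk e w (Or.inl (behind_refl e))

lemma cross_eq (hS : Ω.Simple) (hT : Ω.graph.IsTree) {e : Ω.A} {x y : Ω.V}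
    (hx : Ω.Behind e x) (hy : Ω.InFront e y) (hadj : Ω.graph.Adj x y) :
    s(x, y) = s(Ω.s e, Ω.t e) := by
  by_contra hne
  have hadj' : (dg Ω e).Adj x y := SimpleGraph.deleteEdges_adj.mpr ⟨hadj, by simpa using hne⟩
  exact not_behind_inFront hS hT e y ⟨hx.trans hadj'.reachable, hy⟩

lemma induce_walk_reach {S : Set Ω.V} {e : Ω.A} (hs : Ω.s e ∉ S) :
    ∀ {x y : S}, (Ω.graph.induce S).Walk x y → (dg Ω e).Reachable x.1 y.1 := by
  intro x y w
  induction w with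
  | nil => exact Reachable.refl _
  | @cons u c d h p ih =>
    have hadj : Ω.graph.Adj u.1 c.1 := h
    have hne : s(u.1, c.1) ≠ s(Ω.s e, Ω.t e) := by
      intro hcon
      rcases Sym2.eq_iff.mp hcon with ⟨h1, -⟩ | ⟨-, h2⟩
      · exact hs (h1 ▸ u.2)
      · exact hs (h2 ▸ c.2)
    exact (SimpleGraph.deleteEdges_adj.mpr ⟨hadj, by simpa using hne⟩).reachable.trans ih

lemma inFront_of_connSub (hT : Ω.graph.IsTree) {S : Set Ω.V} (hC : Ω.ConnSub S) {e : Ω.A}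
    (ht : Ω.t e ∈ S) (hs : Ω.s e ∉ S) : ∀ v ∈ S, Ω.InFront e v := by
  intro v hv
  obtain ⟨w⟩ := hC (Ω.t e) ht v hv
  exact induce_walk_reach hs w

namespace Journey

variable {W : Journey Ω}

lemma succ_le {p : ℕ} (hp : (p : ℕ∞) < W.len) : ((p + 1 : ℕ) : ℕ∞) ≤ W.len := by
  push_cast
  exact Order.add_one_le_of_lt hp

lemma lt_of_succ_le {p : ℕ} (hp : ((p + 1 : ℕ) : ℕ∞) ≤ W.len) : (p : ℕ∞) < W.len := by
  push_cast at hp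
  exact (ENat.add_one_le_iff (ENat.coe_ne_top p)).mp hp

lemma adj_edge (hW : W.Inj) {p : ℕ} (hp : (p : ℕ∞) < W.len) :
    Ω.graph.Adj (W.vtx p) (W.vtx (p + 1)) ∧
      s(W.vtx p, W.vtx (p + 1)) = s(Ω.s (W.arr p), Ω.t (W.arr p)) := by
  have hne : W.vtx p ≠ W.vtx (p + 1) := by
    intro h
    have := hW p (p + 1) hp.le (succ_le hp) h
    omega
  rcases W.compat p hp with ⟨h1, h2⟩ | ⟨h1, h2⟩
  · exact ⟨⟨hne, W.arr p, Or.inl ⟨h1, h2⟩⟩, by rw [h1, h2]⟩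
  · exact ⟨⟨hne, W.arr p, Or.inr ⟨h1, h2⟩⟩, by rw [h1, h2]; exact Sym2.eq_swap⟩

lemma edge_ne (hW : W.Inj) {p q : ℕ} (hp : (p : ℕ∞) < W.len) (hq : (q : ℕ∞) < W.len)
    (hne : p ≠ q) : s(W.vtx p, W.vtx (p + 1)) ≠ s(W.vtx q, W.vtx (q + 1)) := by
  intro h
  rcases Sym2.eq_iff.mp h with ⟨h1, h2⟩ | ⟨h1, h2⟩
  · exact hne (hW p q hp.le hq.le h1)
  · have e1 := hW p (q + 1) hp.le (succ_le hq) h1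
    have e2 := hW (p + 1) q (succ_le hp) hq.le h2
    omega

lemma del_adj (hW : W.Inj) {p r : ℕ} (hp : (p : ℕ∞) < W.len) (hr : (r : ℕ∞) < W.len)
    (hne : r ≠ p) : (dg Ω (W.arr p)).Adj (W.vtx r) (W.vtx (r + 1)) := by
  refine SimpleGraph.deleteEdges_adj.mpr ⟨(adj_edge hW hr).1, ?_⟩
  simp only [Set.mem_singleton_iff]
  rw [← (adj_edge hW hp).2]
  exact edge_ne hW hr hp hne

lemma reach_back (hW : W.Inj) {p : ℕ} (hp : (p : ℕ∞) < W.len) :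
    ∀ d r, r + d = p → (dg Ω (W.arr p)).Reachable (W.vtx p) (W.vtx r) := by
  intro d
  induction d with
  | zero =>
    intro r hr
    rw [Nat.add_zero] at hr
    rw [hr]
  | succ d ih =>
    intro r hr
    have h1 : (r : ℕ∞) < W.len := by
      refine lt_trans ?_ hp
      exact_mod_cast (by omega : r < p)
    have hadj := del_adj hW hp h1 (by omega)
    exact (ih (r + 1) (by omega)).trans hadj.reachable.symm

lemma reach_fwd (hW : W.Inj) {p : ℕ} (hp : (p : ℕ∞) < W.len) :
    ∀ d r, r = p + 1 + d → (r : ℕ∞) ≤ W.len →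
      (dg Ω (W.arr p)).Reachable (W.vtx (p + 1)) (W.vtx r) := by
  intro d
  induction d with
  | zero =>
    intro r hr _
    rw [hr]
  | succ d ih =>
    intro r hr hrlen
    have hr' : r = (p + 1 + d) + 1 := by omega
    have hlen' : ((p + 1 + d : ℕ) : ℕ∞) < W.len := by
      apply lt_of_succ_le
      rw [hr'] at hrlen
      exact_mod_cast hrlen
    have hadj := del_adj hW hp hlen' (by omega)
    have hih := ih (p + 1 + d) rfl hlen'.le
    rw [hr']
    exact hih.trans hadj.reachable

lemma behind_side (hW : W.Inj) {p : ℕ} (hp : (p : ℕ∞) < W.len) {r : ℕ}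
    (hr : (r : ℕ∞) ≤ W.len) :
    (¬W.Inconsistent p →
      (r ≤ p → Ω.Behind (W.arr p) (W.vtx r)) ∧ (p + 1 ≤ r → Ω.InFront (W.arr p) (W.vtx r))) ∧
    (W.Inconsistent p →
      (r ≤ p → Ω.InFront (W.arr p) (W.vtx r)) ∧ (p + 1 ≤ r → Ω.Behind (W.arr p) (W.vtx r))) := by
  rcases W.compat p hp with ⟨h1, h2⟩ | ⟨h1, h2⟩
  · constructor
    · intro _
      constructor
      · intro hrp
        show (dg Ω (W.arr p)).Reachable (Ω.s (W.arr p)) (W.vtx r)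
        rw [h1]
        exact reach_back hW hp (p - r) r (by omega)
      · intro hpr
        show (dg Ω (W.arr p)).Reachable (Ω.t (W.arr p)) (W.vtx r)
        rw [h2]
        exact reach_fwd hW hp (r - (p + 1)) r (by omega) hr
    · intro hinc
      exfalso
      have := hW p (p + 1) hp.le (succ_le hp) (h1.symm.trans hinc.1)
      omega
  · constructor
    · intro hnin
      exact absurd ⟨h1, h2⟩ hnin
    · intro _
      constructor
      · intro hrp
        show (dg Ω (W.arr p)).Reachable (Ω.t (W.arr p)) (W.vtx r)
        rw [h2]
        exact reach_back hW hp (p - r) r (by omega)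
      · intro hpr
        show (dg Ω (W.arr p)).Reachable (Ω.s (W.arr p)) (W.vtx r)
        rw [h1]
        exact reach_fwd hW hp (r - (p + 1)) r (by omega) hr

lemma pos_dichotomy (hS : Ω.Simple) (hT : Ω.graph.IsTree) (hW : W.Inj) {p q : ℕ}
    (hp : (p : ℕ∞) < W.len) (hq : (q : ℕ∞) < W.len) (hne : q ≠ p)
    (h1 : Ω.Behind (W.arr p) (W.vtx q)) :
    (¬W.Inconsistent p → q < p) ∧ (W.Inconsistent p → p < q) := by
  constructor
  · intro hc
    by_contra hle
    have hq1 : p + 1 ≤ q := by omega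
    exact not_behind_inFront hS hT _ _ ⟨h1, ((behind_side hW hp hq.le).1 hc).2 hq1⟩
  · intro hc
    by_contra hle
    have hq1 : q ≤ p := by omega
    exact not_behind_inFront hS hT _ _ ⟨h1, ((behind_side hW hp hq.le).2 hc).1 hq1⟩

end Journey

/-- There is no sequence of arrows in which every later arrow lies (entirely) behind
every earlier one. -/
lemma no_cumul_behind (hS : Ω.Simple) (hT : Ω.graph.IsTree)
    (hEO : Ω.EventuallyOutward) (hFB : Ω.FinitelyBranched) (g : ℕ → Ω.A)
    (hg : ∀ i j, i < j → Ω.Behind (g i) (Ω.s (g j)) ∧ Ω.Behind (g i) (Ω.t (g j))) : False := by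
  obtain ⟨k, J, hInj, -, hA⟩ := hFB
  have gne : ∀ i j, i < j → g i ≠ g j := by
    intro i j hij heq
    have h2 := (hg i j hij).2
    rw [← heq] at h2
    exact not_behind_inFront hS hT (g i) (Ω.t (g i)) ⟨h2, inFront_refl _⟩
  have ginj : Function.Injective g := by
    intro i j h
    rcases lt_trichotomy i j with hij | rfl | hij
    · exact absurd h (gne i j hij)
    · rfl
    · exact absurd h.symm (gne j i hij)
  choose m pos hlt harr using fun i => hA (g i)
  obtain ⟨μ, hμ⟩ := Finite.exists_infinite_fiber m
  have hPinf : {n | m n = μ}.Infinite := by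
    rw [← Set.infinite_coe_iff]
    have : m ⁻¹' {μ} = {n | m n = μ} := by ext n; simp
    rw [← this]
    exact hμ
  set P : ℕ → Prop := fun n => m n = μ with hPdef
  have hPinf' : (setOf P).Infinite := hPinf
  have σmono : StrictMono (Nat.nth P) := Nat.nth_strictMono hPinf'
  have σmem : ∀ l, m (Nat.nth P l) = μ := fun l => Nat.nth_mem_of_infinite hPinf' l
  set W := J μ with hWdef
  set q : ℕ → ℕ := fun l => pos (Nat.nth P l) with hqdef
  have hqlt : ∀ l, ((q l : ℕ) : ℕ∞) < W.len := by
    intro l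
    have := hlt (Nat.nth P l)
    rwa [σmem l] at this
  have hqarr : ∀ l, W.arr (q l) = g (Nat.nth P l) := by
    intro l
    have := harr (Nat.nth P l)
    rwa [σmem l] at this
  have qinj : Function.Injective q := by
    intro l l' h
    have hgg : g (Nat.nth P l) = g (Nat.nth P l') := by rw [← hqarr, ← hqarr, h]
    exact σmono.injective (ginj hgg)
  have hdich : ∀ l l', l < l' →
      (¬W.Inconsistent (q l) → q l' < q l) ∧ (W.Inconsistent (q l) → q l < q l') := by
    intro l l' hll
    have hij := hg (Nat.nth P l) (Nat.nth P l') (σmono hll)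
    rw [← hqarr l, ← hqarr l'] at hij
    have hb : Ω.Behind (W.arr (q l)) (W.vtx (q l')) := by
      rcases W.compat (q l') (hqlt l') with ⟨h1, -⟩ | ⟨-, h2⟩
      · exact h1 ▸ hij.1
      · exact h2 ▸ hij.2
    exact Journey.pos_dichotomy hS hT (hInj μ) (hqlt l) (hqlt l')
      (fun h => absurd (qinj h) (by omega)) hb
  have hSfin := hEO W (hInj μ)
  have hUfin : {l | q l < q (l + 1)}.Finite := by
    apply Set.Finite.subset (Set.Finite.preimage (Set.injOn_of_injective qinj) hSfin)
    intro l hl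
    simp only [Set.mem_setOf_eq] at hl
    by_cases hinc : W.Inconsistent (q l)
    · exact ⟨hqlt l, hinc⟩
    · exact absurd ((hdich l (l + 1) (by omega)).1 hinc) (by omega)
  obtain ⟨L, hL⟩ := hUfin.bddAbove
  have hdec : ∀ i, q (L + 1 + i + 1) < q (L + 1 + i) := by
    intro i
    have hnotU : ¬(q (L + 1 + i) < q (L + 1 + i + 1)) := by
      intro hmem
      have := hL (Set.mem_setOf_eq ▸ hmem : (L + 1 + i) ∈ {l | q l < q (l + 1)})
      omega
    have hne' : q (L + 1 + i + 1) ≠ q (L + 1 + i) := fun h => by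
      have := qinj h; omega
    omega
  have hbound : ∀ i, q (L + 1 + i) + i ≤ q (L + 1) := by
    intro i
    induction i with
    | zero => simp
    | succ i ih =>
      have := hdec i
      have h2 : L + 1 + (i + 1) = L + 1 + i + 1 := by omega
      rw [h2]
      omega
  have := hbound (q (L + 1) + 1)
  omega

lemma behind_mono (hS : Ω.Simple) (hT : Ω.graph.IsTree) {f e : Ω.A} (hfe : Ω.Prec f e) :
    ∀ v, Ω.Behind f v → Ω.Behind e v := by
  intro v hv
  rcases behind_or_inFront hT e v with h | h
  · exact h
  exfalso
  obtain ⟨w⟩ := hv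
  have h1 : Ω.Behind e (Ω.s f) := hfe.1.1
  have h2 : ¬Ω.Behind e v := fun hb => not_behind_inFront hS hT e v ⟨hb, h⟩
  obtain ⟨x, y, hxy, hax, hPx, hPy, -⟩ := walk_cross (Ω.Behind e) w h1 h2
  have hyF : Ω.InFront e y := (behind_or_inFront hT e y).resolve_left hPy
  have hedge := cross_eq hS hT hPx hyF (SimpleGraph.deleteEdges_adj.mp hxy).1
  have hxB : Ω.Behind f x := hax
  have hyB : Ω.Behind f y := hax.trans hxy.reachable
  have hteB : Ω.Behind f (Ω.t e) := by
    rcases Sym2.eq_iff.mp hedge with ⟨-, h2'⟩ | ⟨h1', -⟩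
    · exact h2' ▸ hyB
    · exact h1' ▸ hxB
  exact not_behind_inFront hS hT f (Ω.t e) ⟨hteB, hfe.2.2⟩

lemma prec_wf (hS : Ω.Simple) (hT : Ω.graph.IsTree)
    (hEO : Ω.EventuallyOutward) (hFB : Ω.FinitelyBranched) : WellFounded Ω.Prec := by
  apply wf_of_no_desc
  intro emb hc
  have lift : ∀ i d v, Ω.Behind (emb (i + d)) v → Ω.Behind (emb i) v := by
    intro i d
    induction d with
    | zero => exact fun v => id
    | succ d ih => exact fun v hv => ih v (behind_mono hS hT (hc (i + d)) v hv)
  apply no_cumul_behind hS hT hEO hFB emb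
  intro i j hij
  obtain ⟨d, rfl⟩ : ∃ d, j = (i + d) + 1 := ⟨j - i - 1, by omega⟩
  have h1 := (hc (i + d)).1
  exact ⟨lift i d _ h1.1, lift i d _ h1.2⟩

lemma inFront_finite (hS : Ω.Simple) (hT : Ω.graph.IsTree) (hEO : Ω.EventuallyOutward)
    (hFB : Ω.FinitelyBranched) (v : Ω.V) : {e : Ω.A | Ω.InFront e v}.Finite := by
  obtain ⟨k, J, hInj, -, hA⟩ := hFB
  have key : ∀ μ : Fin k, {p : ℕ | (p : ℕ∞) < (J μ).len ∧ Ω.InFront ((J μ).arr p) v}.Finite := by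
    intro μ
    set W := J μ with hWdef
    obtain ⟨w⟩ := hT.1.preconnected v (W.vtx 0)
    have hsub : {p : ℕ | (p : ℕ∞) < W.len ∧ Ω.InFront (W.arr p) v} ⊆
        {p : ℕ | (p : ℕ∞) < W.len ∧ W.Inconsistent p} ∪
          {p : ℕ | (p : ℕ∞) < W.len ∧ s(W.vtx p, W.vtx (p + 1)) ∈ w.edges} := by
      rintro p ⟨hp, hpf⟩
      by_cases hinc : W.Inconsistent p
      · exact Or.inl ⟨hp, hinc⟩
      · right
        refine ⟨hp, ?_⟩
        have hside := (Journey.behind_side (hInj μ) hp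
          (show ((0 : ℕ) : ℕ∞) ≤ W.len from by simp)).1 hinc
        have h0 : Ω.Behind (W.arr p) (W.vtx 0) := hside.1 (Nat.zero_le p)
        have hnot : ¬Ω.InFront (W.arr p) (W.vtx 0) := fun hf =>
          not_behind_inFront hS hT _ _ ⟨h0, hf⟩
        obtain ⟨x, y, hxy, -, hPx, hPy, hmem⟩ := walk_cross (Ω.InFront (W.arr p)) w hpf hnot
        have hyB : Ω.Behind (W.arr p) y := (behind_or_inFront hT _ y).resolve_right hPy
        have hcr := cross_eq hS hT hyB hPx hxy.symm
        have hedge := (Journey.adj_edge (hInj μ) hp).2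
        have heq : s(x, y) = s(W.vtx p, W.vtx (p + 1)) := by
          rw [hedge, ← hcr]
          exact Sym2.eq_swap
        rwa [← heq]
    apply Set.Finite.subset (Set.Finite.union (hEO W (hInj μ)) ?_) hsub
    have hinj : Set.InjOn (fun p => s(W.vtx p, W.vtx (p + 1)))
        {p : ℕ | (p : ℕ∞) < W.len ∧ s(W.vtx p, W.vtx (p + 1)) ∈ w.edges} := by
      intro p hp q hq h
      by_contra hne
      exact Journey.edge_ne (hInj μ) hp.1 hq.1 hne h
    apply Set.Finite.of_finite_image ?_ hinj
    apply Set.Finite.subset w.edges.finite_toSet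
    rintro _ ⟨p, ⟨-, hmem⟩, rfl⟩
    exact hmem
  apply Set.Finite.subset (Set.finite_iUnion (fun μ : Fin k => (key μ).image ((J μ).arr)))
  intro e he
  obtain ⟨μ, n, hn, harr⟩ := hA e
  exact Set.mem_iUnion.mpr ⟨μ, ⟨n, ⟨hn, by rwa [harr]⟩, harr⟩⟩

/-- The set of inward-pointing boundary arrows of a subquiver. -/
def Inw (Ω : Qvr) (α : Set Ω.V) : Set Ω.A := {e | Ω.t e ∈ α ∧ Ω.s e ∉ α}

lemma inw_finite (hS : Ω.Simple) (hT : Ω.graph.IsTree) (hEO : Ω.EventuallyOutward)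
    (hFB : Ω.FinitelyBranched) {α : Set Ω.V} (hC : Ω.ConnSub α) (hne : α.Nonempty) :
    (Ω.Inw α).Finite := by
  obtain ⟨v, hv⟩ := hne
  apply (inFront_finite hS hT hEO hFB v).subset
  rintro e ⟨hte, hse⟩
  exact inFront_of_connSub hT hC hte hse v hv

lemma enh_step (hS : Ω.Simple) (hT : Ω.graph.IsTree) {α β : Set Ω.V} (hC : Ω.ConnSub β)
    (h : Ω.Enhancement α β) :
    ∃ f, f ∈ Ω.Inw α ∧ f ∉ Ω.Inw β ∧
      ∀ e ∈ Ω.Inw β, (e ∈ Ω.Inw α ∧ e ≠ f) ∨ Ω.Prec e f := by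
  obtain ⟨f, hsf, htf, hα⟩ := h
  have hsfα : Ω.s f ∉ α := by
    rw [hα]
    rintro ⟨-, hF⟩
    exact not_behind_inFront hS hT f (Ω.s f) ⟨behind_refl f, hF⟩
  have htfα : Ω.t f ∈ α := by rw [hα]; exact ⟨htf, inFront_refl f⟩
  refine ⟨f, ⟨htfα, hsfα⟩, fun hcon => hcon.2 hsf, ?_⟩
  rintro e ⟨hte, hse⟩
  have hαβ : α ⊆ β := by rw [hα]; exact fun x hx => hx.1
  have hseα : Ω.s e ∉ α := fun h' => hse (hαβ h')
  by_cases hteF : Ω.InFront f (Ω.t e)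
  · left
    refine ⟨⟨by rw [hα]; exact ⟨hte, hteF⟩, hseα⟩, ?_⟩
    rintro rfl
    exact hse hsf
  · right
    have hteB : Ω.Behind f (Ω.t e) := (behind_or_inFront hT f (Ω.t e)).resolve_right hteF
    have hef : e ≠ f := by rintro rfl; exact hteF (inFront_refl e)
    have hseB : Ω.Behind f (Ω.s e) := by
      rcases behind_or_inFront hT f (Ω.s e) with h' | h'
      · exact h'
      · exfalso
        have hcross := cross_eq hS hT hteB h' (adj_arrow hS e).symm
        apply hef
        apply arrow_eq_of_sym2 hS
        rw [← hcross]
        exact Sym2.eq_swap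
    exact And.intro (And.intro hseB hteB) (And.intro
      (inFront_of_connSub hT hC hte hse (Ω.s f) hsf)
      (inFront_of_connSub hT hC hte hse (Ω.t f) htf))

lemma red_inw (hS : Ω.Simple) (hT : Ω.graph.IsTree) {α β : Set Ω.V} (g : Ω.A)
    (hsg : Ω.s g ∈ α) (htg : Ω.t g ∈ α) (hβ : β = {i ∈ α | Ω.Behind g i}) :
    Ω.Inw β ⊆ Ω.Inw α := by
  rintro e ⟨hte, hse⟩
  rw [hβ] at hte
  refine ⟨hte.1, fun hseα => ?_⟩
  have hseF : Ω.InFront g (Ω.s e) := by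
    rcases behind_or_inFront hT g (Ω.s e) with h' | h'
    · exact absurd (by rw [hβ]; exact ⟨hseα, h'⟩ : Ω.s e ∈ β) hse
    · exact h'
  have hcross := cross_eq hS hT hte.2 hseF (adj_arrow hS e).symm
  have heg : e = g := by
    apply arrow_eq_of_sym2 hS
    rw [← hcross]
    exact Sym2.eq_swap
  subst heg
  exact not_behind_inFront hS hT e (Ω.t e) ⟨hte.2, inFront_refl e⟩

end Qvr

end Stmt3Aux

/-- Let `Ω` be an eventually outward finitely branched tree quiver.
There is no infinite sequence `α 0, α 1, α 2, …` of connected full subquivers of `Ω` such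
that each `α (n+1)` is a nontrivial reduction or enhancement of `α n`. -/
theorem stmt3 (Ω : Qvr) (hS : Ω.Simple) (hT : Ω.graph.IsTree)
    (hEO : Ω.EventuallyOutward) (hFB : Ω.FinitelyBranched) :
    ¬∃ α : ℕ → Set Ω.V, (∀ n, Ω.ConnSub (α n)) ∧
      ∀ n, Ω.Move (α n) (α (n + 1)) ∧ α (n + 1) ≠ α n := by
  rintro ⟨α, hC, hM⟩
  classical
  have hne : ∀ n, (α n).Nonempty := by
    intro n
    rcases (hM n).1 with ⟨e, hs, -, -⟩ | ⟨e, -, ht, hα⟩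
    · exact ⟨Ω.s e, hs⟩
    · exact ⟨Ω.t e, by rw [hα]; exact ⟨ht, Qvr.inFront_refl e⟩⟩
  have hfin : ∀ n, (Ω.Inw (α n)).Finite := fun n =>
    Qvr.inw_finite hS hT hEO hFB (hC n) (hne n)
  set M : ℕ → Multiset Ω.A := fun n => ((hfin n).toFinset).val with hMdef
  have hmem : ∀ n e, e ∈ M n ↔ e ∈ Ω.Inw (α n) := by
    intro n e
    simp [hMdef, Set.Finite.mem_toFinset]
  have hnodup : ∀ n, (M n).Nodup := fun n => ((hfin n).toFinset).nodup
  set R : Multiset Ω.A → Multiset Ω.A → Prop := Relation.CutExpand Ω.Prec with hRdef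
  have hwf : WellFounded (Relation.TransGen R) :=
    (Qvr.prec_wf hS hT hEO hFB).cutExpand.transGen
  have hremove : ∀ s t : Multiset Ω.A, s ≤ t → Relation.ReflTransGen R s t := by
    intro s t hst
    obtain ⟨u, rfl⟩ : ∃ u, t = s + u :=
      ⟨t - s, by rw [add_comm]; exact (tsub_add_cancel_of_le hst).symm⟩
    clear hst
    induction u using Multiset.induction with
    | empty => simpa using Relation.ReflTransGen.refl
    | cons a u ih =>
      have hstep : R (s + u) (s + u + {a}) := ⟨0, a, by simp, by simp⟩
      have heq : s + (a ::ₘ u) = s + u + {a} := by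
        rw [← Multiset.singleton_add, add_comm ({a} : Multiset Ω.A) u, ← add_assoc]
      rw [heq]
      exact ih.tail hstep
  have hstepall : ∀ n, Relation.ReflTransGen R (M (n + 1)) (M n) ∧
      (Ω.Enhancement (α n) (α (n + 1)) → Relation.TransGen R (M (n + 1)) (M n)) := by
    intro n
    by_cases hE : Ω.Enhancement (α n) (α (n + 1))
    · obtain ⟨f, hfmem, hfnot, hrest⟩ := Qvr.enh_step hS hT (hC (n + 1)) hE
      have hfM : f ∈ M n := (hmem n f).mpr hfmem
      set T : Multiset Ω.A := M (n + 1) - (M n).erase f with hTdef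
      have hTprec : ∀ x ∈ T, Ω.Prec x f := by
        intro x hx
        have hx1 : x ∈ M (n + 1) := Multiset.mem_of_le tsub_le_self hx
        have hx2 : x ∉ (M n).erase f := by
          intro hmem'
          have hc1 : Multiset.count x (M (n + 1)) ≤ 1 :=
            Multiset.nodup_iff_count_le_one.mp (hnodup (n + 1)) x
          have hc2 : 1 ≤ Multiset.count x ((M n).erase f) :=
            Multiset.one_le_count_iff_mem.mpr hmem'
          have hc3 : 0 < Multiset.count x T := Multiset.count_pos.mpr hx
          rw [hTdef, Multiset.count_sub] at hc3
          omega
        have hxI : x ∈ Ω.Inw (α (n + 1)) := (hmem _ x).mp hx1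
        have hxf : x ≠ f := by
          rintro rfl
          exact hfnot hxI
        have hxMn : x ∉ Ω.Inw (α n) := by
          intro hmm
          exact hx2 ((hnodup n).mem_erase_iff.mpr ⟨hxf, (hmem n x).mpr hmm⟩)
        rcases hrest x hxI with ⟨hin, -⟩ | hprec
        · exact absurd hin hxMn
        · exact hprec
      have hcut : R ((M n).erase f + T) (M n) := by
        refine ⟨T, f, hTprec, ?_⟩
        have h1 : (M n).erase f + {f} = M n := by
          rw [add_comm, Multiset.singleton_add]
          exact Multiset.cons_erase hfM
        calc (M n).erase f + T + {f} = (M n).erase f + {f} + T := by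
              rw [add_assoc, add_comm T ({f} : Multiset Ω.A), ← add_assoc]
          _ = M n + T := by rw [h1]
      have hle : M (n + 1) ≤ (M n).erase f + T := le_add_tsub
      have htg : Relation.TransGen R (M (n + 1)) (M n) := Relation.TransGen.tail' (hremove _ _ hle) hcut
      exact ⟨htg.to_reflTransGen, fun _ => htg⟩
    · obtain ⟨g, hsg, htg, hβ⟩ := (hM n).1.resolve_right hE
      have hsub : Ω.Inw (α (n + 1)) ⊆ Ω.Inw (α n) := Qvr.red_inw hS hT g hsg htg hβ
      have hle : M (n + 1) ≤ M n := by
        rw [hMdef]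
        exact Finset.val_le_iff.mpr (Set.Finite.toFinset_subset_toFinset.mpr hsub)
      exact ⟨hremove _ _ hle, fun hEnh => absurd hEnh hE⟩
  have hEfin : {n | Ω.Enhancement (α n) (α (n + 1))}.Finite := by
    by_contra hinf
    have hinf' : {n | Ω.Enhancement (α n) (α (n + 1))}.Infinite := hinf
    have hgt : ∀ N : ℕ, ∃ n, Ω.Enhancement (α n) (α (n + 1)) ∧ N < n := by
      intro N
      obtain ⟨n, hn, hNn⟩ := hinf'.exists_gt N
      exact ⟨n, hn, hNn⟩
    choose next hnextmem hnextgt using hgt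
    set τ : ℕ → ℕ := fun i => Nat.rec (next 0) (fun _ prev => next prev) i with hτ
    have hτmem : ∀ i, Ω.Enhancement (α (τ i)) (α (τ i + 1)) := by
      intro i
      cases i with
      | zero => exact hnextmem 0
      | succ i => exact hnextmem (τ i)
    have hτgt : ∀ i, τ i < τ (i + 1) := fun i => hnextgt (τ i)
    have hchain : ∀ a b : ℕ, a ≤ b → Relation.ReflTransGen R (M b) (M a) := by
      intro a b hab
      induction b with
      | zero =>
        have : a = 0 := by omega
        rw [this]
      | succ b ih =>
        by_cases hab' : a ≤ b
        · exact ((hstepall b).1).trans (ih hab')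
        · have : a = b + 1 := by omega
          rw [this]
    have hdesc : ∀ i, Relation.TransGen R (M (τ (i + 1))) (M (τ i)) := by
      intro i
      have h1 : Relation.ReflTransGen R (M (τ (i + 1))) (M (τ i + 1)) :=
        hchain _ _ (hτgt i)
      exact Relation.TransGen.trans_right h1 ((hstepall (τ i)).2 (hτmem i))
    exact Qvr.no_desc_of_wf hwf (fun i => M (τ i)) hdesc
  obtain ⟨L, hL⟩ := hEfin.bddAbove
  set N : ℕ := L + 1 with hNdef
  have hred : ∀ i, Ω.Reduction (α (N + i)) (α (N + i + 1)) := by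
    intro i
    refine (hM (N + i)).1.resolve_right fun hEnh => ?_
    have := hL (show N + i ∈ {n | Ω.Enhancement (α n) (α (n + 1))} from hEnh)
    omega
  choose g hg1 hg2 hg3 using hred
  have hmono : ∀ i j, i ≤ j → α (N + j) ⊆ α (N + i) := by
    intro i j hij
    induction j with
    | zero =>
      have : i = 0 := by omega
      rw [this]
    | succ j ih =>
      by_cases h' : i ≤ j
      · refine subset_trans ?_ (ih h')
        rw [show N + (j + 1) = N + j + 1 from rfl, hg3 j]
        exact fun x hx => hx.1
      · have : i = j + 1 := by omega
        rw [this]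
  apply Qvr.no_cumul_behind hS hT hEO hFB g
  intro i j hij
  have h1 : α (N + j) ⊆ α (N + (i + 1)) := hmono (i + 1) j hij
  have hsj : Ω.s (g j) ∈ α (N + j) := hg1 j
  have htj : Ω.t (g j) ∈ α (N + j) := hg2 j
  have hsub : α (N + (i + 1)) = {x ∈ α (N + i) | Ω.Behind (g i) x} := hg3 i
  constructor
  · have := h1 hsj
    rw [hsub] at this
    exact this.2
  · have := h1 htj
    rw [hsub] at this
    exact this.2
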